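/- Fix β ≥ 0 and for λ > 0 set μ(λ) = (0, −2β, −β − λ/2) ∈ ℝ³. Then as λ → +∞: z₁(μ(λ)) → 1/2 + I₁(β)/(2 I₀(β)), z₂(μ(λ)) → 1/2 − I₁(β)/(2 I₀(β)), and z₃(μ(λ)) → 0. (As one exponent of a three-dimensional Bingham distribution tends to −∞, the second moments converge to those of a two-dimensional Bingham distribution.) -/

import Mathlib

/-!
Slicing the sphere by the planes `m₃ = t` (Archimedes: `dσ = dt dφ`), the numerator and the
denominator of `zᵢ(μ(λ))` both become integrals `∫₋₁¹ e^{-λt²/2} F(t) dt`, where `F(t)` is an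
integral over the circle of latitude at height `t` and is continuous in `t`. As `λ → ∞` the
weights `√λ e^{-λt²/2}` concentrate at `t = 0` (Laplace's method), so `zᵢ` tends to the quotient
of the two equatorial integrals, a second moment of a Bingham distribution on the circle. On the
equator the exponent is `-2β sin²φ = β cos 2φ - β`, and the substitution `ψ = 2φ` turns these
integrals into `I₀(β)` and `I₁(β)`.
-/

open Real Filter

/-- Integral of a function over the unit sphere `S² ⊂ ℝ³` with respect to the
surface measure, written in spherical coordinates
`m = (sin θ cos φ, sin θ sin φ, cos θ)` with surface element `sin θ dφ dθ`. -/
noncomputable def sphereIntegral (f : (Fin 3 → ℝ) → ℝ) : ℝ :=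
  ∫ θ in (0:ℝ)..Real.pi, ∫ φ in (0:ℝ)..(2 * Real.pi),
    f ![Real.sin θ * Real.cos φ, Real.sin θ * Real.sin φ, Real.cos θ] * Real.sin θ

/-- The Bingham normalizing constant
`Z(μ) = (1/(4π)) ∫_{S²} exp(μ₁ m₁² + μ₂ m₂² + μ₃ m₃²) dσ(m)`. -/
noncomputable def binghamZ (μ : Fin 3 → ℝ) : ℝ :=
  (1 / (4 * Real.pi)) * sphereIntegral (fun m => Real.exp (∑ i, μ i * (m i) ^ 2))

/-- The second moments of the Bingham distribution:
`zᵢ(μ) = (1/(4π Z(μ))) ∫_{S²} mᵢ² exp(μ₁ m₁² + μ₂ m₂² + μ₃ m₃²) dσ(m)`. -/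
noncomputable def binghamZ2 (μ : Fin 3 → ℝ) (i : Fin 3) : ℝ :=
  (1 / (4 * Real.pi * binghamZ μ)) *
    sphereIntegral (fun m => (m i) ^ 2 * Real.exp (∑ j, μ j * (m j) ^ 2))

/-- The modified Bessel function of integer order `n`:
`Iₙ(μ) = (1/(2π)) ∫₀^{2π} e^{μ cos θ} cos (n θ) dθ`. -/
noncomputable def besselI (n : ℤ) (μ : ℝ) : ℝ :=
  (1 / (2 * Real.pi)) * ∫ θ in (0:ℝ)..(2 * Real.pi),
    Real.exp (μ * Real.cos θ) * Real.cos ((n : ℝ) * θ)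

open MeasureTheory Set Bornology Topology

lemma binghamZ2_eq_div (μ : Fin 3 → ℝ) (i : Fin 3) :
    binghamZ2 μ i = sphereIntegral (fun m => m i ^ 2 * exp (∑ j, μ j * m j ^ 2)) /
      sphereIntegral (fun m => exp (∑ j, μ j * m j ^ 2)) := by
  rw [binghamZ2, binghamZ, ← mul_assoc, mul_one_div_cancel (by positivity), one_mul,
    one_div_mul_eq_div]

noncomputable def latitudeIntegral (f : (Fin 3 → ℝ) → ℝ) (t : ℝ) : ℝ :=
  ∫ φ in (0:ℝ)..(2 * π), f ![√(1 - t ^ 2) * cos φ, √(1 - t ^ 2) * sin φ, t]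

lemma continuous_latitudeIntegral {f : (Fin 3 → ℝ) → ℝ} (hf : Continuous f) :
    Continuous (latitudeIntegral f) :=
  intervalIntegral.continuous_parametric_intervalIntegral_of_continuous' (by fun_prop) _ _

theorem sphereIntegral_eq_integral_latitudeIntegral {f : (Fin 3 → ℝ) → ℝ} (hf : Continuous f) :
    sphereIntegral f = ∫ t in (-1)..1, latitudeIntegral f t := by
  have hlatitude : ∀ θ ∈ uIcc 0 π, (∫ φ in (0:ℝ)..(2 * π),
      f ![sin θ * cos φ, sin θ * sin φ, cos θ] * sin θ) = latitudeIntegral f (cos θ) * sin θ := by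
    intro θ hθ
    rw [uIcc_of_le pi_pos.le] at hθ
    rw [intervalIntegral.integral_mul_const, latitudeIntegral,
      ← sin_eq_sqrt_one_sub_cos_sq hθ.1 hθ.2]
  have hsubst := intervalIntegral.integral_comp_mul_deriv (a := 0) (b := π)
    (fun x _ => hasDerivAt_cos x) continuous_sin.neg.continuousOn
    (continuous_latitudeIntegral hf)
  rw [cos_zero, cos_pi, intervalIntegral.integral_symm (-1)] at hsubst
  rw [sphereIntegral, intervalIntegral.integral_congr hlatitude, ← neg_neg (∫ t in (-1)..1, _),
    ← hsubst, ← intervalIntegral.integral_neg]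
  simp

theorem sphereIntegral_exp_neg_mul_sq_mul {f : (Fin 3 → ℝ) → ℝ} (hf : Continuous f) (lam : ℝ) :
    sphereIntegral (fun m => exp (-(lam * m 2 ^ 2) / 2) * f m) =
      ∫ t in (-1)..1, exp (-(lam * t ^ 2) / 2) * latitudeIntegral f t := by
  rw [sphereIntegral_eq_integral_latitudeIntegral (by fun_prop)]
  simp [latitudeIntegral, intervalIntegral.integral_const_mul]

lemma tendsto_norm_mul_exp_neg_pi_mul_sq :
    Tendsto (fun x : ℝ => ‖x‖ * exp (-π * x ^ 2)) (cobounded ℝ) (𝓝 0) := by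
  have h := ((rpow_mul_exp_neg_mul_sq_isLittleO_exp_neg pi_pos 1).trans_tendsto
    (tendsto_exp_atBot.comp (tendsto_id.const_mul_atTop_of_neg (by norm_num)))).comp
    (tendsto_norm_cobounded_atTop (E := ℝ))
  refine h.congr fun x => ?_
  simp [norm_eq_abs, sq_abs]

/-- Laplace's method: `t ↦ c e^{-π (c t)²}` has integral one and concentrates at `0`. -/
theorem tendsto_mul_integral_exp_neg_pi_mul_sq_mul {H : ℝ → ℝ} {a b : ℝ} (ha : a < 0)
    (hb : 0 < b) (hH : ContinuousOn H (Icc a b)) :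
    Tendsto (fun c : ℝ => c * ∫ t in a..b, exp (-π * (c * t) ^ 2) * H t) atTop (𝓝 (H 0)) := by
  have hg : Integrable ((Icc a b).indicator H) :=
    (hH.integrableOn_compact isCompact_Icc).integrable_indicator measurableSet_Icc
  have hg₀ : ContinuousAt ((Icc a b).indicator H) 0 :=
    (hH.mono interior_subset).continuousAt_indicator
      (by simp [frontier_Icc (ha.trans hb).le, ha.ne', hb.ne])
  have hφ : ∫ x : ℝ, exp (-π * x ^ 2) = 1 := by
    rw [integral_gaussian, div_self pi_ne_zero, sqrt_one]
  have := tendsto_integral_comp_smul_smul_of_integrable (μ := volume)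
    (fun x => (exp_pos (-π * x ^ 2)).le) hφ (by simpa using tendsto_norm_mul_exp_neg_pi_mul_sq)
    hg hg₀
  rw [indicator_of_mem (mem_Icc.2 ⟨ha.le, hb.le⟩)] at this
  refine this.congr fun c => ?_
  rw [intervalIntegral.integral_of_le (ha.trans hb).le, ← integral_Icc_eq_integral_Ioc,
    ← integral_const_mul, ← integral_indicator measurableSet_Icc]
  congr 1 with x
  by_cases hx : x ∈ Icc a b <;> simp [hx, mul_assoc]

theorem tendsto_integral_exp_neg_mul_sq_mul_div {F G : ℝ → ℝ} {a b : ℝ} (ha : a < 0)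
    (hb : 0 < b) (hF : ContinuousOn F (Icc a b)) (hG : ContinuousOn G (Icc a b))
    (hG₀ : G 0 ≠ 0) :
    Tendsto (fun lam : ℝ => (∫ t in a..b, exp (-(lam * t ^ 2) / 2) * F t) /
      ∫ t in a..b, exp (-(lam * t ^ 2) / 2) * G t) atTop (𝓝 (F 0 / G 0)) := by
  have hc : Tendsto (fun lam : ℝ => √(lam / (2 * π))) atTop atTop :=
    tendsto_sqrt_atTop.comp (tendsto_id.atTop_div_const (by positivity))
  refine (((tendsto_mul_integral_exp_neg_pi_mul_sq_mul ha hb hF).div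
    (tendsto_mul_integral_exp_neg_pi_mul_sq_mul ha hb hG) hG₀).comp hc).congr' ?_
  filter_upwards [eventually_gt_atTop 0] with lam hlam
  have hsq (t : ℝ) : -π * (√(lam / (2 * π)) * t) ^ 2 = -(lam * t ^ 2) / 2 := by
    rw [mul_pow, sq_sqrt (by positivity)]
    field_simp
  simp only [Function.comp_apply, Pi.div_apply, hsq]
  exact mul_div_mul_left _ _ (by positivity)

theorem tendsto_binghamZ2_atTop (a b c : ℝ) (i : Fin 3) :
    Tendsto (fun lam : ℝ => binghamZ2 ![a, b, c - lam / 2] i) atTop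
      (𝓝 ((∫ φ in (0:ℝ)..(2 * π), ![cos φ, sin φ, 0] i ^ 2 * exp (a * cos φ ^ 2 + b * sin φ ^ 2)) /
        ∫ φ in (0:ℝ)..(2 * π), exp (a * cos φ ^ 2 + b * sin φ ^ 2))) := by
  set E : (Fin 3 → ℝ) → ℝ := fun m => exp (a * m 0 ^ 2 + b * m 1 ^ 2 + c * m 2 ^ 2)
  have hE : Continuous E := by fun_prop
  have hsplit (lam : ℝ) (m : Fin 3 → ℝ) :
      exp (∑ j, ![a, b, c - lam / 2] j * m j ^ 2) = exp (-(lam * m 2 ^ 2) / 2) * E m := by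
    rw [← exp_add, exp_eq_exp, Fin.sum_univ_three]
    simp only [Matrix.cons_val_zero, Matrix.cons_val_one, Matrix.cons_val]
    ring
  have hequator : 0 < latitudeIntegral E 0 :=
    intervalIntegral.intervalIntegral_pos_of_pos
      ((by fun_prop : Continuous _).intervalIntegrable _ _) (fun _ => exp_pos _) (by positivity)
  have hlaplace := tendsto_integral_exp_neg_mul_sq_mul_div (a := -1) (b := 1) (by norm_num) (by norm_num)
    (continuous_latitudeIntegral (f := fun m => m i ^ 2 * E m) (by fun_prop)).continuousOn
    (continuous_latitudeIntegral hE).continuousOn hequator.ne'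
  convert hlaplace using 2 with lam
  · rw [binghamZ2_eq_div]
    simp_rw [hsplit, mul_left_comm _ (exp _)]
    rw [sphereIntegral_exp_neg_mul_sq_mul (by fun_prop), sphereIntegral_exp_neg_mul_sq_mul hE]
  · simp [latitudeIntegral, E]

theorem Function.Periodic.intervalIntegral_comp_two_mul {E : Type*} [NormedAddCommGroup E]
    [NormedSpace ℝ E] {f : ℝ → E} {T : ℝ} (hf : Function.Periodic f T) (hfc : Continuous f) :
    ∫ x in (0:ℝ)..T, f (2 * x) = ∫ x in (0:ℝ)..T, f x := by
  rw [intervalIntegral.integral_comp_mul_left f two_ne_zero, mul_zero, two_mul,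
    hf.intervalIntegral_add_eq_add 0 T (fun _ _ => hfc.intervalIntegrable _ _), zero_add,
    ← two_smul ℝ, smul_smul, inv_mul_cancel₀ two_ne_zero, one_smul]

theorem integral_exp_mul_cos_two_mul_mul_cos (n : ℤ) (β : ℝ) :
    ∫ φ in (0:ℝ)..(2 * π), exp (β * cos (2 * φ)) * cos (n * (2 * φ)) = 2 * π * besselI n β := by
  have hper : Function.Periodic (fun ψ => exp (β * cos ψ) * cos (n * ψ)) (2 * π) := fun ψ => by
    simp only [mul_add, cos_add_two_pi, cos_add_int_mul_two_pi]
  rw [hper.intervalIntegral_comp_two_mul (by fun_prop), besselI]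
  field_simp

lemma besselI_zero_pos (β : ℝ) : 0 < besselI 0 β := by
  rw [besselI]
  refine mul_pos (by positivity) (intervalIntegral.intervalIntegral_pos_of_pos
    ((by fun_prop : Continuous _).intervalIntegrable _ _) (fun x => ?_) (by positivity))
  simpa using exp_pos _

lemma exp_neg_two_mul_sin_sq (β φ : ℝ) :
    exp (-2 * β * sin φ ^ 2) = exp (-β) * exp (β * cos (2 * φ)) := by
  rw [← exp_add, cos_two_mul, sin_sq]
  ring_nf

theorem integral_mul_exp_neg_two_mul_sin_sq (p q β : ℝ) :
    ∫ φ in (0:ℝ)..(2 * π), (p + q * cos (2 * φ)) * exp (-2 * β * sin φ ^ 2) =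
      2 * π * exp (-β) * (p * besselI 0 β + q * besselI 1 β) := by
  have hint (n : ℤ) : IntervalIntegrable (fun φ => exp (β * cos (2 * φ)) * cos (n * (2 * φ)))
      volume 0 (2 * π) := (by fun_prop : Continuous _).intervalIntegrable _ _
  have hsplit (φ : ℝ) : (p + q * cos (2 * φ)) * exp (-2 * β * sin φ ^ 2) =
      exp (-β) * (p * (exp (β * cos (2 * φ)) * cos ((0:ℤ) * (2 * φ))) +
        q * (exp (β * cos (2 * φ)) * cos ((1:ℤ) * (2 * φ)))) := by
    simp only [Int.cast_zero, Int.cast_one, zero_mul, one_mul, cos_zero, exp_neg_two_mul_sin_sq]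
    ring
  simp_rw [hsplit]
  rw [intervalIntegral.integral_const_mul, intervalIntegral.integral_add ((hint 0).const_mul p)
    ((hint 1).const_mul q), intervalIntegral.integral_const_mul,
    intervalIntegral.integral_const_mul, integral_exp_mul_cos_two_mul_mul_cos,
    integral_exp_mul_cos_two_mul_mul_cos]
  ring

lemma integral_exp_neg_two_mul_sin_sq (β : ℝ) :
    ∫ φ in (0:ℝ)..(2 * π), exp (-2 * β * sin φ ^ 2) = 2 * π * exp (-β) * besselI 0 β := by
  simpa using integral_mul_exp_neg_two_mul_sin_sq 1 0 β

lemma integral_cos_sq_mul_exp_neg_two_mul_sin_sq (β : ℝ) :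
    ∫ φ in (0:ℝ)..(2 * π), cos φ ^ 2 * exp (-2 * β * sin φ ^ 2) =
      π * exp (-β) * (besselI 0 β + besselI 1 β) := by
  rw [show π * exp (-β) * (besselI 0 β + besselI 1 β) =
    2 * π * exp (-β) * (1 / 2 * besselI 0 β + 1 / 2 * besselI 1 β) by ring,
    ← integral_mul_exp_neg_two_mul_sin_sq]
  congr 1 with φ
  rw [cos_sq]
  ring

lemma integral_sin_sq_mul_exp_neg_two_mul_sin_sq (β : ℝ) :
    ∫ φ in (0:ℝ)..(2 * π), sin φ ^ 2 * exp (-2 * β * sin φ ^ 2) =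
      π * exp (-β) * (besselI 0 β - besselI 1 β) := by
  rw [show π * exp (-β) * (besselI 0 β - besselI 1 β) =
    2 * π * exp (-β) * (1 / 2 * besselI 0 β + -1 / 2 * besselI 1 β) by ring,
    ← integral_mul_exp_neg_two_mul_sin_sq]
  congr 1 with φ
  congr 1
  rw [sin_sq_eq_half_sub]
  ring

theorem bingham_moments_degenerate_to_2d_general (β : ℝ) :
    Tendsto (fun lam : ℝ => binghamZ2 ![0, -2 * β, -β - lam / 2] 0) atTop
      (nhds (1/2 + besselI 1 β / (2 * besselI 0 β))) ∧
    Tendsto (fun lam : ℝ => binghamZ2 ![0, -2 * β, -β - lam / 2] 1) atTop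
      (nhds (1/2 - besselI 1 β / (2 * besselI 0 β))) ∧
    Tendsto (fun lam : ℝ => binghamZ2 ![0, -2 * β, -β - lam / 2] 2) atTop
      (nhds 0) := by
  have hI₀ := (besselI_zero_pos β).ne'
  refine ⟨?_, ?_, ?_⟩
  · convert tendsto_binghamZ2_atTop 0 (-2 * β) (-β) 0 using 2
    simp only [Matrix.cons_val_zero, zero_mul, zero_add, integral_exp_neg_two_mul_sin_sq,
      integral_cos_sq_mul_exp_neg_two_mul_sin_sq]
    field_simp
  · convert tendsto_binghamZ2_atTop 0 (-2 * β) (-β) 1 using 2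
    simp only [Matrix.cons_val_one, Matrix.cons_val_zero, zero_mul, zero_add,
      integral_exp_neg_two_mul_sin_sq, integral_sin_sq_mul_exp_neg_two_mul_sin_sq]
    field_simp
  · convert tendsto_binghamZ2_atTop 0 (-2 * β) (-β) 2 using 2
    simp

/-- As one exponent of a 3D Bingham distribution tends to `−∞` along
`μ(λ) = (0, −2β, −β − λ/2)`, the second moments converge to those of a 2D
Bingham distribution: `z₁ → 1/2 + I₁(β)/(2I₀(β))`, `z₂ → 1/2 − I₁(β)/(2I₀(β))`,
`z₃ → 0`. -/
theorem bingham_moments_degenerate_to_2d (β : ℝ) (hβ : 0 ≤ β) :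
    Tendsto (fun lam : ℝ => binghamZ2 ![0, -2 * β, -β - lam / 2] 0) atTop
      (nhds (1/2 + besselI 1 β / (2 * besselI 0 β))) ∧
    Tendsto (fun lam : ℝ => binghamZ2 ![0, -2 * β, -β - lam / 2] 1) atTop
      (nhds (1/2 - besselI 1 β / (2 * besselI 0 β))) ∧
    Tendsto (fun lam : ℝ => binghamZ2 ![0, -2 * β, -β - lam / 2] 2) atTop
      (nhds 0) :=
  bingham_moments_degenerate_to_2d_general β
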